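/- arXiv:2210.07208 — 3 statements merged into one kernel-verified Lean document; each statement's English description precedes it below -/
import Mathlib

section
/- Let f : ℝ×ℝ×ℝ → ℝ be continuously differentiable, let E : ℝ×ℝ → ℝ be twice continuously differentiable, and let L > 0 and ρ₀ ∈ ℝ. Suppose: f solves the 1D1V Vlasov equation ∂_t f + v ∂_x f + E ∂_v f = 0; f and E(·,t) are L-periodic in x; there is R > 0 such that f(x,v,t) = 0 whenever |v| ≥ R; the Poisson relation ∂_x E(x,t) = ρ(x,t) − ρ₀ holds where ρ(x,t) = ∫_ℝ f(x,v,t) dv; and ∫₀^L E(x,t) dx = 0 for all t. Then the total energy ∫₀^L ( ½∫_ℝ v² f(x,v,t) dv + ½ E(x,t)² ) dx is constant in t. -/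
open MeasureTheory Real intervalIntegral

/-- Differentiation under an interval integral, with jointly continuous data. -/
lemma hasDerivAt_param (g g' : ℝ → ℝ → ℝ) (a b s₀ : ℝ)
    (hg : Continuous fun p : ℝ × ℝ => g p.1 p.2)
    (hg' : Continuous fun p : ℝ × ℝ => g' p.1 p.2)
    (hdiff : ∀ t s, HasDerivAt (fun s => g t s) (g' t s) s) :
    HasDerivAt (fun s => ∫ t in a..b, g t s) (∫ t in a..b, g' t s₀) s₀ := by
  have hK : IsCompact ((Set.uIcc a b) ×ˢ (Metric.closedBall s₀ 1)) :=
    isCompact_uIcc.prod (isCompact_closedBall _ _)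
  obtain ⟨C, hC⟩ := hK.exists_bound_of_continuousOn hg'.continuousOn
  have main := intervalIntegral.hasDerivAt_integral_of_dominated_loc_of_deriv_le
    (F := fun s t => g t s) (F' := fun s t => g' t s) (bound := fun _ => C)
    (a := a) (b := b) (μ := volume) (x₀ := s₀) (Metric.ball_mem_nhds s₀ one_pos)
    (Filter.Eventually.of_forall fun s =>
      ((hg.comp (continuous_id.prodMk continuous_const)).aestronglyMeasurable))
    ((hg.comp (continuous_id.prodMk continuous_const)).intervalIntegrable a b)
    ((hg'.comp (continuous_id.prodMk continuous_const)).aestronglyMeasurable)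
    (ae_of_all _ fun t ht s hs => by
      have := hC (t, s) ⟨Set.uIoc_subset_uIcc ht, Metric.ball_subset_closedBall hs⟩
      simpa using this)
    (continuous_const.intervalIntegrable a b)
    (ae_of_all _ fun t ht s hs => hdiff t s)
  exact main.2
open MeasureTheory Real

noncomputable def pX (f : ℝ → ℝ → ℝ → ℝ) (x v t : ℝ) : ℝ :=
  fderiv ℝ (fun p : ℝ × ℝ × ℝ => f p.1 p.2.1 p.2.2) (x, v, t) (1, 0, 0)
noncomputable def pV (f : ℝ → ℝ → ℝ → ℝ) (x v t : ℝ) : ℝ :=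
  fderiv ℝ (fun p : ℝ × ℝ × ℝ => f p.1 p.2.1 p.2.2) (x, v, t) (0, 1, 0)
noncomputable def pT (f : ℝ → ℝ → ℝ → ℝ) (x v t : ℝ) : ℝ :=
  fderiv ℝ (fun p : ℝ × ℝ × ℝ => f p.1 p.2.1 p.2.2) (x, v, t) (0, 0, 1)

variable {f : ℝ → ℝ → ℝ → ℝ}

lemma hasDerivAt_pX (hf : ContDiff ℝ 1 (fun p : ℝ × ℝ × ℝ => f p.1 p.2.1 p.2.2))
    (x v t : ℝ) : HasDerivAt (fun y => f y v t) (pX f x v t) x := by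
  have h1 := (hf.differentiable one_ne_zero (x, v, t)).hasFDerivAt
  have h2 : HasDerivAt (fun y : ℝ => ((y, v, t) : ℝ × ℝ × ℝ)) (1, 0, 0) x :=
    HasDerivAt.prodMk (hasDerivAt_id x) (hasDerivAt_const x (v, t))
  exact h1.comp_hasDerivAt x h2

lemma hasDerivAt_pV (hf : ContDiff ℝ 1 (fun p : ℝ × ℝ × ℝ => f p.1 p.2.1 p.2.2))
    (x v t : ℝ) : HasDerivAt (fun u => f x u t) (pV f x v t) v := by
  have h1 := (hf.differentiable one_ne_zero (x, v, t)).hasFDerivAt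
  have h2 : HasDerivAt (fun u : ℝ => ((x, u, t) : ℝ × ℝ × ℝ)) (0, 1, 0) v :=
    HasDerivAt.prodMk (hasDerivAt_const v x) (HasDerivAt.prodMk (hasDerivAt_id v) (hasDerivAt_const v t))
  exact h1.comp_hasDerivAt v h2

lemma hasDerivAt_pT (hf : ContDiff ℝ 1 (fun p : ℝ × ℝ × ℝ => f p.1 p.2.1 p.2.2))
    (x v t : ℝ) : HasDerivAt (fun s => f x v s) (pT f x v t) t := by
  have h1 := (hf.differentiable one_ne_zero (x, v, t)).hasFDerivAt
  have h2 : HasDerivAt (fun s : ℝ => ((x, v, s) : ℝ × ℝ × ℝ)) (0, 0, 1) t :=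
    HasDerivAt.prodMk (hasDerivAt_const t x) (HasDerivAt.prodMk (hasDerivAt_const t v) (hasDerivAt_id t))
  exact h1.comp_hasDerivAt t h2

lemma cont_pX (hf : ContDiff ℝ 1 (fun p : ℝ × ℝ × ℝ => f p.1 p.2.1 p.2.2)) :
    Continuous fun p : ℝ × ℝ × ℝ => pX f p.1 p.2.1 p.2.2 := by
  have := (hf.continuous_fderiv one_ne_zero).clm_apply (continuous_const (y := ((1:ℝ),(0:ℝ),(0:ℝ))))
  simpa [pX] using this

lemma cont_pV (hf : ContDiff ℝ 1 (fun p : ℝ × ℝ × ℝ => f p.1 p.2.1 p.2.2)) :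
    Continuous fun p : ℝ × ℝ × ℝ => pV f p.1 p.2.1 p.2.2 := by
  have := (hf.continuous_fderiv one_ne_zero).clm_apply (continuous_const (y := ((0:ℝ),(1:ℝ),(0:ℝ))))
  simpa [pV] using this

lemma cont_pT (hf : ContDiff ℝ 1 (fun p : ℝ × ℝ × ℝ => f p.1 p.2.1 p.2.2)) :
    Continuous fun p : ℝ × ℝ × ℝ => pT f p.1 p.2.1 p.2.2 := by
  have := (hf.continuous_fderiv one_ne_zero).clm_apply (continuous_const (y := ((0:ℝ),(0:ℝ),(1:ℝ))))
  simpa [pT] using this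

noncomputable def qX (E : ℝ → ℝ → ℝ) (x t : ℝ) : ℝ :=
  fderiv ℝ (fun p : ℝ × ℝ => E p.1 p.2) (x, t) (1, 0)
noncomputable def qT (E : ℝ → ℝ → ℝ) (x t : ℝ) : ℝ :=
  fderiv ℝ (fun p : ℝ × ℝ => E p.1 p.2) (x, t) (0, 1)

variable {E : ℝ → ℝ → ℝ}

lemma hasDerivAt_qX (hE : ContDiff ℝ 2 (fun p : ℝ × ℝ => E p.1 p.2)) (x t : ℝ) :
    HasDerivAt (fun y => E y t) (qX E x t) x := by
  have h1 := (hE.differentiable (by norm_num) (x, t)).hasFDerivAt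
  have h2 : HasDerivAt (fun y : ℝ => ((y, t) : ℝ × ℝ)) (1, 0) x :=
    HasDerivAt.prodMk (hasDerivAt_id x) (hasDerivAt_const x t)
  exact h1.comp_hasDerivAt x h2

lemma hasDerivAt_qT (hE : ContDiff ℝ 2 (fun p : ℝ × ℝ => E p.1 p.2)) (x t : ℝ) :
    HasDerivAt (fun s => E x s) (qT E x t) t := by
  have h1 := (hE.differentiable (by norm_num) (x, t)).hasFDerivAt
  have h2 : HasDerivAt (fun s : ℝ => ((x, s) : ℝ × ℝ)) (0, 1) t :=
    HasDerivAt.prodMk (hasDerivAt_const t x) (hasDerivAt_id t)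
  exact h1.comp_hasDerivAt t h2

lemma cont_qT (hE : ContDiff ℝ 2 (fun p : ℝ × ℝ => E p.1 p.2)) :
    Continuous fun p : ℝ × ℝ => qT E p.1 p.2 := by
  have := (hE.continuous_fderiv (by norm_num)).clm_apply (continuous_const (y := ((0:ℝ),(1:ℝ))))
  simpa [qT] using this

/-- Reduce a full-line integral of a compactly supported function to an interval integral. -/
lemma integral_eq_intervalIntegral {R : ℝ} (hR : 0 < R) (g : ℝ → ℝ)
    (h0 : ∀ v, R ≤ |v| → g v = 0) :
    (∫ v : ℝ, g v) = ∫ v in (-R)..R, g v := by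
  rw [intervalIntegral.integral_of_le (by linarith), ← MeasureTheory.integral_indicator measurableSet_Ioc]
  congr 1
  ext v
  by_cases h : v ∈ Set.Ioc (-R) R
  · simp [h]
  · have : R ≤ |v| := by
      simp only [Set.mem_Ioc, not_and_or, not_lt, not_le] at h
      rcases h with h | h
      · rw [abs_of_nonpos (by linarith)]; linarith
      · rw [abs_of_pos (by linarith)]; linarith
    simp [h, h0 v this]

/-- Joint continuity of a parametric interval integral with jointly continuous integrand. -/
lemma contPI {g : ℝ → ℝ → ℝ → ℝ}
    (hg : Continuous fun p : ℝ × ℝ × ℝ => g p.1 p.2.1 p.2.2) (R : ℝ) :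
    Continuous fun p : ℝ × ℝ => ∫ v in (-R)..R, g p.1 v p.2 := by
  apply intervalIntegral.continuous_parametric_intervalIntegral_of_continuous'
    (f := fun (p : ℝ × ℝ) v => g p.1 v p.2) (μ := volume)
  exact hg.comp (((continuous_fst.comp continuous_fst)).prodMk
    (continuous_snd.prodMk (continuous_snd.comp continuous_fst)))

/-- Differentiation under an interval integral for integrands of the form `w v * g v s`. -/
lemma hasDerivAt_wint (w : ℝ → ℝ) (hw : Continuous w)
    {g g' : ℝ → ℝ → ℝ} (hg : Continuous fun p : ℝ × ℝ => g p.1 p.2)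
    (hg' : Continuous fun p : ℝ × ℝ => g' p.1 p.2)
    (hdiff : ∀ v s, HasDerivAt (fun s => g v s) (g' v s) s) (a b s₀ : ℝ) :
    HasDerivAt (fun s => ∫ v in a..b, w v * g v s) (∫ v in a..b, w v * g' v s₀) s₀ :=
  hasDerivAt_param _ _ a b s₀ ((hw.comp continuous_fst).mul hg)
    ((hw.comp continuous_fst).mul hg') (fun v s => (hdiff v s).const_mul (w v))

/-- Total energy conservation for the 1D1V Vlasov–Poisson system with periodic
boundary conditions: `∫₀^L (½∫ v² f dv + ½E²) dx` is constant in `t`. -/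
theorem vlasov_poisson_total_energy_conservation
    (f : ℝ → ℝ → ℝ → ℝ) (E : ℝ → ℝ → ℝ) (L : ℝ) (hL : 0 < L) (ρ₀ : ℝ)
    (hf : ContDiff ℝ 1 (fun p : ℝ × ℝ × ℝ => f p.1 p.2.1 p.2.2))
    (hE : ContDiff ℝ 2 (fun p : ℝ × ℝ => E p.1 p.2))
    (hVlasov : ∀ x v t,
      deriv (fun s => f x v s) t + v * deriv (fun y => f y v t) x
        + E x t * deriv (fun u => f x u t) v = 0)
    (hfper : ∀ x v t, f (x + L) v t = f x v t)
    (hEper : ∀ x t, E (x + L) t = E x t)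
    (hsupp : ∃ R > (0:ℝ), ∀ x v t, R ≤ |v| → f x v t = 0)
    (hPoisson : ∀ x t, deriv (fun y => E y t) x = (∫ v : ℝ, f x v t) - ρ₀)
    (hEmean : ∀ t, (∫ x in (0:ℝ)..L, E x t) = 0) :
    ∀ t₁ t₂ : ℝ,
      (∫ x in (0:ℝ)..L, ((1/2) * (∫ v : ℝ, v ^ 2 * f x v t₁) + (1/2) * (E x t₁) ^ 2))
        = ∫ x in (0:ℝ)..L, ((1/2) * (∫ v : ℝ, v ^ 2 * f x v t₂) + (1/2) * (E x t₂) ^ 2) := by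
  obtain ⟨R, hR, h0⟩ := hsupp
  have fc : Continuous (fun p : ℝ × ℝ × ℝ => f p.1 p.2.1 p.2.2) := hf.continuous
  have Ec : Continuous (fun p : ℝ × ℝ => E p.1 p.2) := hE.continuous
  -- continuity of partials
  have cpX := cont_pX hf
  have cpV := cont_pV hf
  have cpT := cont_pT hf
  have cqT := cont_qT hE
  -- Vlasov in terms of partials
  have hVl : ∀ x v t, pT f x v t = -(v * pX f x v t) - E x t * pV f x v t := by
    intro x v t
    have h := hVlasov x v t
    rw [(hasDerivAt_pT hf x v t).deriv, (hasDerivAt_pX hf x v t).deriv,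
      (hasDerivAt_pV hf x v t).deriv] at h
    linarith
  -- support facts
  have hfR : ∀ x t, f x R t = 0 := fun x t => h0 x R t (by rw [abs_of_pos hR])
  have hfmR : ∀ x t, f x (-R) t = 0 := fun x t => h0 x (-R) t (by rw [abs_neg, abs_of_pos hR])
  -- periodicity at endpoints
  have hperf : ∀ v t, f L v t = f 0 v t := fun v t => by
    have := hfper 0 v t; rwa [zero_add] at this
  -- Poisson in interval form
  have hP : ∀ x t, qX E x t = (∫ v in (-R)..R, f x v t) - ρ₀ := by
    intro x t
    have h1 := (hasDerivAt_qX hE x t).deriv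
    rw [hPoisson x t,
      integral_eq_intervalIntegral hR _ (fun v hv => h0 x v t hv)] at h1
    exact h1.symm
  -- some continuity facts for slices
  have cf_x : ∀ x, Continuous fun p : ℝ × ℝ => f x p.1 p.2 := fun x =>
    fc.comp (continuous_const.prodMk (continuous_fst.prodMk continuous_snd))
  have cpT_x : ∀ x, Continuous fun p : ℝ × ℝ => pT f x p.1 p.2 := fun x =>
    cpT.comp (continuous_const.prodMk (continuous_fst.prodMk continuous_snd))
  have cf_t : ∀ t, Continuous fun p : ℝ × ℝ => f p.2 p.1 t := fun t =>
    fc.comp (continuous_snd.prodMk (continuous_fst.prodMk continuous_const))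
  have cpX_t : ∀ t, Continuous fun p : ℝ × ℝ => pX f p.2 p.1 t := fun t =>
    cpX.comp (continuous_snd.prodMk (continuous_fst.prodMk continuous_const))
  -- 1-variable continuity
  have cf1 : ∀ x t, Continuous fun v => f x v t := fun x t =>
    fc.comp (continuous_const.prodMk (continuous_id.prodMk continuous_const))
  have cpX1 : ∀ x t, Continuous fun v => pX f x v t := fun x t =>
    cpX.comp (continuous_const.prodMk (continuous_id.prodMk continuous_const))
  have cpV1 : ∀ x t, Continuous fun v => pV f x v t := fun x t =>
    cpV.comp (continuous_const.prodMk (continuous_id.prodMk continuous_const))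
  have cpT1 : ∀ x t, Continuous fun v => pT f x v t := fun x t =>
    cpT.comp (continuous_const.prodMk (continuous_id.prodMk continuous_const))
  -- abbreviations (as functions of x, for fixed t)
  -- key derivative computation
  have key : ∀ t₀ : ℝ, HasDerivAt
      (fun t => ∫ x in (0:ℝ)..L,
        ((1/2) * (∫ v in (-R)..R, v ^ 2 * f x v t) + (1/2) * (E x t) ^ 2)) 0 t₀ := by
    intro t₀
    -- derivative of kinetic term in t
    have hKt : ∀ x t₀, HasDerivAt (fun t => ∫ v in (-R)..R, v ^ 2 * f x v t)
        (∫ v in (-R)..R, v ^ 2 * pT f x v t₀) t₀ := fun x t₀ =>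
      hasDerivAt_wint _ (continuous_pow 2) (cf_x x) (cpT_x x)
        (fun v s => hasDerivAt_pT hf x v s) _ _ t₀
    -- derivative of field term in t
    have hE2t : ∀ x t₀, HasDerivAt (fun t => (1/2) * (E x t) ^ 2)
        (E x t₀ * qT E x t₀) t₀ := by
      intro x t₀
      have h := ((hasDerivAt_qT hE x t₀).pow 2).const_mul (1/2 : ℝ)
      exact h.congr_deriv (by push_cast; ring)
    -- derivative of the full energy
    have hW := hasDerivAt_param
      (fun x t => (1/2) * (∫ v in (-R)..R, v ^ 2 * f x v t) + (1/2) * (E x t) ^ 2)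
      (fun x t => (1/2) * (∫ v in (-R)..R, v ^ 2 * pT f x v t) + E x t * qT E x t)
      0 L t₀
      ((continuous_const.mul (contPI (g := fun x v t => v ^ 2 * f x v t)
          (((continuous_fst.comp continuous_snd).pow 2).mul fc) R)).add
        (continuous_const.mul (Ec.pow 2)))
      ((continuous_const.mul (contPI (g := fun x v t => v ^ 2 * pT f x v t)
          (((continuous_fst.comp continuous_snd).pow 2).mul cpT) R)).add
        (Ec.mul cqT))
      (fun x t => ((hKt x t).const_mul (1/2)).add (hE2t x t))
    -- now show the derivative value is zero
    suffices hzero : (∫ x in (0:ℝ)..L,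
        ((1/2) * (∫ v in (-R)..R, v ^ 2 * pT f x v t₀) + E x t₀ * qT E x t₀)) = 0 by
      rw [hzero] at hW; exact hW

    -- integration by parts in v: kinetic term
    have KtEq : ∀ x, (∫ v in (-R)..R, v ^ 2 * pT f x v t₀)
        = -(∫ v in (-R)..R, v ^ 3 * pX f x v t₀)
          + 2 * (E x t₀ * ∫ v in (-R)..R, v * f x v t₀) := by
      intro x
      rw [intervalIntegral.integral_congr (g := fun v =>
        -(v ^ 3 * pX f x v t₀) - E x t₀ * (v ^ 2 * pV f x v t₀))
        (fun v _ => by show v ^ 2 * pT f x v t₀ = _; rw [hVl x v t₀]; ring)]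
      rw [intervalIntegral.integral_sub (f := fun v => -(v ^ 3 * pX f x v t₀))
        (g := fun v => E x t₀ * (v ^ 2 * pV f x v t₀))
        (((continuous_pow 3).mul (cpX1 x t₀)).neg.intervalIntegrable _ _)
        ((continuous_const.mul ((continuous_pow 2).mul (cpV1 x t₀))).intervalIntegrable _ _),
        intervalIntegral.integral_neg, intervalIntegral.integral_const_mul]
      have parts := intervalIntegral.integral_mul_deriv_eq_deriv_mul (a := -R) (b := R)
        (u := fun v => v ^ 2) (u' := fun v => 2 * v) (v := fun v => f x v t₀)
        (v' := fun v => pV f x v t₀)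
        (fun v _ => by simpa using hasDerivAt_pow 2 v)
        (fun v _ => hasDerivAt_pV hf x v t₀)
        ((continuous_const.mul continuous_id).intervalIntegrable _ _)
        ((cpV1 x t₀).intervalIntegrable _ _)
      rw [parts]
      simp only [hfR, hfmR]
      have h2 : (∫ v in (-R)..R, 2 * v * f x v t₀)
          = 2 * ∫ v in (-R)..R, v * f x v t₀ := by
        rw [← intervalIntegral.integral_const_mul]
        apply intervalIntegral.integral_congr
        intro v _
        show 2 * v * f x v t₀ = _
        ring
      rw [h2]; ring
    -- FTC in x: flux term integrates to zero by periodicity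
    have hPint : (∫ x in (0:ℝ)..L, ∫ v in (-R)..R, v ^ 3 * pX f x v t₀) = 0 := by
      rw [intervalIntegral.integral_eq_sub_of_hasDerivAt
        (f := fun y => ∫ v in (-R)..R, v ^ 3 * f y v t₀)
        (fun x _ => hasDerivAt_wint (fun v => v ^ 3) (continuous_pow 3) (cf_t t₀) (cpX_t t₀)
          (fun v y => hasDerivAt_pX hf y v t₀) _ _ x)
        (((contPI (g := fun x v t => v ^ 3 * pX f x v t)
          (((continuous_fst.comp continuous_snd).pow 3).mul cpX) R).comp
          (continuous_id.prodMk continuous_const)).intervalIntegrable _ _)]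
      have hQeq : (∫ v in (-R)..R, v ^ 3 * f L v t₀)
          = ∫ v in (-R)..R, v ^ 3 * f 0 v t₀ :=
        intervalIntegral.integral_congr
          (fun v _ => by show v ^ 3 * f L v t₀ = _; rw [hperf v t₀])
      rw [hQeq, sub_self]
    -- J + ∂ₜE is constant in x
    have cρ : Continuous fun p : ℝ × ℝ => ∫ v in (-R)..R, f p.1 v p.2 :=
      contPI (g := fun x v t => f x v t) fc R
    have cρT : Continuous fun p : ℝ × ℝ => ∫ v in (-R)..R, pT f p.1 v p.2 := contPI cpT R
    have hconst : ∀ x, (∫ v in (-R)..R, v * f x v t₀) + qT E x t₀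
        = (∫ v in (-R)..R, v * f 0 v t₀) + qT E 0 t₀ := by
      intro x
      have hEexp : ∀ t, E x t - E 0 t
          = ∫ y in (0:ℝ)..x, ((∫ v in (-R)..R, f y v t) - ρ₀) := by
        intro t
        refine (intervalIntegral.integral_eq_sub_of_hasDerivAt
          (f := fun y => E y t) (a := (0:ℝ)) (b := x) (fun y _ => ?_)
          (((cρ.comp (continuous_id.prodMk continuous_const)).sub
            continuous_const).intervalIntegrable _ _)).symm
        have h := hasDerivAt_qX hE y t
        rwa [hP y t] at h
      have hAder : HasDerivAt (fun t => ∫ y in (0:ℝ)..x, ((∫ v in (-R)..R, f y v t) - ρ₀))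
          (∫ y in (0:ℝ)..x, ∫ v in (-R)..R, pT f y v t₀) t₀ :=
        hasDerivAt_param (fun y t => (∫ v in (-R)..R, f y v t) - ρ₀)
          (fun y t => ∫ v in (-R)..R, pT f y v t) 0 x t₀
          (cρ.sub continuous_const) cρT
          (fun y t =>
            (hasDerivAt_param (fun v t => f y v t) (fun v t => pT f y v t) (-R) R t
              (cf_x y) (cpT_x y) (fun v s => hasDerivAt_pT hf y v s)).sub_const ρ₀)
      have hLder : HasDerivAt (fun t => E x t - E 0 t) (qT E x t₀ - qT E 0 t₀) t₀ :=
        (hasDerivAt_qT hE x t₀).sub (hasDerivAt_qT hE 0 t₀)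
      have huniq : qT E x t₀ - qT E 0 t₀
          = ∫ y in (0:ℝ)..x, ∫ v in (-R)..R, pT f y v t₀ := by
        have hfun : (fun t => E x t - E 0 t)
            = fun t => ∫ y in (0:ℝ)..x, ((∫ v in (-R)..R, f y v t) - ρ₀) := funext hEexp
        rw [hfun] at hLder
        exact hLder.unique hAder
      have hρt : ∀ y, (∫ v in (-R)..R, pT f y v t₀)
          = -(∫ v in (-R)..R, v * pX f y v t₀) := by
        intro y
        rw [intervalIntegral.integral_congr (g := fun v =>
          -(v * pX f y v t₀) - E y t₀ * pV f y v t₀)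
          (fun v _ => by show pT f y v t₀ = _; rw [hVl y v t₀])]
        rw [intervalIntegral.integral_sub (f := fun v => -(v * pX f y v t₀))
          (g := fun v => E y t₀ * pV f y v t₀)
          ((continuous_id'.mul (cpX1 y t₀)).neg.intervalIntegrable _ _)
          ((continuous_const.mul (cpV1 y t₀)).intervalIntegrable _ _),
          intervalIntegral.integral_neg, intervalIntegral.integral_const_mul]
        have hbdry : (∫ v in (-R)..R, pV f y v t₀) = f y R t₀ - f y (-R) t₀ :=
          intervalIntegral.integral_eq_sub_of_hasDerivAt
            (fun v _ => hasDerivAt_pV hf y v t₀) ((cpV1 y t₀).intervalIntegrable _ _)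
        rw [hbdry, hfR y t₀, hfmR y t₀]; ring
      have hJftc : (∫ y in (0:ℝ)..x, ∫ v in (-R)..R, v * pX f y v t₀)
          = (∫ v in (-R)..R, v * f x v t₀) - ∫ v in (-R)..R, v * f 0 v t₀ :=
        intervalIntegral.integral_eq_sub_of_hasDerivAt
          (f := fun y => ∫ v in (-R)..R, v * f y v t₀)
          (fun y _ => hasDerivAt_wint (fun v => v) continuous_id (cf_t t₀) (cpX_t t₀)
            (fun v y => hasDerivAt_pX hf y v t₀) _ _ y)
          (((contPI (g := fun x v t => v * pX f x v t)
            ((continuous_fst.comp continuous_snd).mul cpX) R).comp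
            (continuous_id.prodMk continuous_const)).intervalIntegrable _ _)
      have h1 : (∫ y in (0:ℝ)..x, ∫ v in (-R)..R, pT f y v t₀)
          = -((∫ v in (-R)..R, v * f x v t₀) - ∫ v in (-R)..R, v * f 0 v t₀) := by
        rw [intervalIntegral.integral_congr (fun y _ => hρt y),
          intervalIntegral.integral_neg, hJftc]
      rw [h1] at huniq
      linarith
    -- assemble
    have hsplit : (∫ x in (0:ℝ)..L,
        ((1/2) * (∫ v in (-R)..R, v ^ 2 * pT f x v t₀) + E x t₀ * qT E x t₀))
        = ∫ x in (0:ℝ)..L, ((-(1/2)) * (∫ v in (-R)..R, v ^ 3 * pX f x v t₀)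
            + E x t₀ * ((∫ v in (-R)..R, v * f 0 v t₀) + qT E 0 t₀)) := by
      apply intervalIntegral.integral_congr
      intro x _
      show (1/2) * (∫ v in (-R)..R, v ^ 2 * pT f x v t₀) + E x t₀ * qT E x t₀ = _
      rw [KtEq x]
      linear_combination (E x t₀) * (hconst x)
    have int1 : IntervalIntegrable
        (fun x => (-(1/2)) * ∫ v in (-R)..R, v ^ 3 * pX f x v t₀) volume 0 L :=
      (continuous_const.mul ((contPI (g := fun x v t => v ^ 3 * pX f x v t)
        (((continuous_fst.comp continuous_snd).pow 3).mul cpX) R).comp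
        (continuous_id.prodMk continuous_const))).intervalIntegrable _ _
    have int2 : IntervalIntegrable
        (fun x => E x t₀ * ((∫ v in (-R)..R, v * f 0 v t₀) + qT E 0 t₀)) volume 0 L :=
      ((Ec.comp (continuous_id.prodMk continuous_const)).mul
        continuous_const).intervalIntegrable _ _
    rw [hsplit, intervalIntegral.integral_add int1 int2,
      intervalIntegral.integral_const_mul, hPint, intervalIntegral.integral_mul_const,
      hEmean t₀]
    ring
  -- conclude from zero derivative
  intro t₁ t₂
  have hconv : ∀ t, (∫ x in (0:ℝ)..L,
      ((1/2) * (∫ v : ℝ, v ^ 2 * f x v t) + (1/2) * (E x t) ^ 2))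
      = ∫ x in (0:ℝ)..L,
      ((1/2) * (∫ v in (-R)..R, v ^ 2 * f x v t) + (1/2) * (E x t) ^ 2) := by
    intro t
    apply intervalIntegral.integral_congr
    intro x _
    show (1/2) * (∫ v : ℝ, v ^ 2 * f x v t) + (1/2) * (E x t) ^ 2 = _
    rw [integral_eq_intervalIntegral hR (fun v => v ^ 2 * f x v t)
      (fun v hv => by simp [h0 x v t hv])]
  rw [hconv t₁, hconv t₂]
  exact is_const_of_deriv_eq_zero (fun t => (key t).differentiableAt)
    (fun t => (key t).deriv) t₁ t₂
end

section
/- Let n ≥ 1, let v ∈ ℝⁿ be a vector of velocity grid nodes, let ω ∈ ℝⁿ and w ∈ ℝⁿ be entrywise strictly positive vectors, and let N = span{𝟙, v, v²} ⊆ ℝⁿ, where 𝟙 is the all-ones vector and v² is the entrywise square of v. Equip ℝⁿ with the weighted inner product ⟨f,g⟩_w = Σ_j f_j g_j w_j ω_j and let P_N be the orthogonal projection onto N with respect to ⟨·,·⟩_w. Then for every f ∈ ℝⁿ, the vector g = w ⋆ P_N(f / w) (entrywise product and quotient) has the same discrete mass, momentum and kinetic energy density as f, i.e. Σ_j g_j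 ω_j = Σ_j f_j ω_j, Σ_j g_j v_j ω_j = Σ_j f_j v_j ω_j, and ½Σ_j g_j v_j² ω_j = ½Σ_j f_j v_j² ω_j. -/
/-! The moment densities `𝟙, v, v²` lie in `N`, and `⟨f / w - P (f / w), g⟩_w` is the difference
of the `g`-moments of `f` and `w ⋆ P (f / w)`, so orthogonality of the residual to `N` is exactly
moment preservation. -/

open Finset

theorem sum_weight_mul_mul_eq_of_orthogonal {ι : Type*} [Fintype ι] {w ω f p g : ι → ℝ}
    (hw : ∀ j, w j ≠ 0) (horth : ∑ j, (f j / w j - p j) * g j * w j * ω j = 0) :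
    ∑ j, (w j * p j) * g j * ω j = ∑ j, f j * g j * ω j := by
  have hsplit : ∑ j, (f j / w j - p j) * g j * w j * ω j
      = ∑ j, f j * g j * ω j - ∑ j, (w j * p j) * g j * ω j := by
    rw [← sum_sub_distrib]
    refine sum_congr rfl fun j _ => ?_
    field_simp [hw j]
  linarith

theorem lomac_projection_preserves_moments_general
    (n : ℕ) (v ω w : Fin n → ℝ)
    (hw : ∀ j, 0 < w j)
    (P : (Fin n → ℝ) → (Fin n → ℝ))
    (hPorth : ∀ f g : Fin n → ℝ,
      g ∈ Submodule.span ℝ ({(fun _ => (1:ℝ)), v, (fun j => (v j) ^ 2)} : Set (Fin n → ℝ)) →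
      ∑ j, (f j - P f j) * g j * w j * ω j = 0)
    (f : Fin n → ℝ) :
    (∑ j, (w j * P (fun i => f i / w i) j) * ω j = ∑ j, f j * ω j) ∧
    (∑ j, (w j * P (fun i => f i / w i) j) * v j * ω j = ∑ j, f j * v j * ω j) ∧
    ((1/2) * ∑ j, (w j * P (fun i => f i / w i) j) * (v j) ^ 2 * ω j
        = (1/2) * ∑ j, f j * (v j) ^ 2 * ω j) := by
  have moment_eq : ∀ g ∈ ({(fun _ => (1:ℝ)), v, (fun j => (v j) ^ 2)} : Set (Fin n → ℝ)),
      ∑ j, (w j * P (fun i => f i / w i) j) * g j * ω j = ∑ j, f j * g j * ω j :=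
    fun g hg => sum_weight_mul_mul_eq_of_orthogonal (fun j => (hw j).ne')
      (hPorth _ g (Submodule.subset_span hg))
  refine ⟨?_, moment_eq v (by simp), ?_⟩
  · simpa using moment_eq (fun _ => 1) (by simp)
  · rw [moment_eq (fun j => v j ^ 2) (by simp)]

/-- The weighted orthogonal projection onto `N = span{𝟙, v, v²}` composed with
scaling by the weight `w` preserves the discrete mass, momentum and kinetic
energy density. -/
theorem lomac_projection_preserves_moments
    (n : ℕ) (hn : 1 ≤ n) (v ω w : Fin n → ℝ)
    (hω : ∀ j, 0 < ω j) (hw : ∀ j, 0 < w j)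
    (P : (Fin n → ℝ) → (Fin n → ℝ))
    (hPmem : ∀ f : Fin n → ℝ,
      P f ∈ Submodule.span ℝ ({(fun _ => (1:ℝ)), v, (fun j => (v j) ^ 2)} : Set (Fin n → ℝ)))
    (hPorth : ∀ f g : Fin n → ℝ,
      g ∈ Submodule.span ℝ ({(fun _ => (1:ℝ)), v, (fun j => (v j) ^ 2)} : Set (Fin n → ℝ)) →
      ∑ j, (f j - P f j) * g j * w j * ω j = 0)
    (f : Fin n → ℝ) :
    (∑ j, (w j * P (fun i => f i / w i) j) * ω j = ∑ j, f j * ω j) ∧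
    (∑ j, (w j * P (fun i => f i / w i) j) * v j * ω j = ∑ j, f j * v j * ω j) ∧
    ((1/2) * ∑ j, (w j * P (fun i => f i / w i) j) * (v j) ^ 2 * ω j
        = (1/2) * ∑ j, f j * (v j) ^ 2 * ω j) :=
  lomac_projection_preserves_moments_general n v ω w hw P hPorth f
end

section
/- Let n ≥ 1, let v ∈ ℝⁿ, and let ω, w ∈ ℝⁿ be entrywise strictly positive. Equip ℝⁿ with ⟨f,g⟩_w = Σ_j f_j g_j w_j ω_j, write 𝟙 for the all-ones vector, v² for the entrywise square of v, and c = ⟨𝟙, v²⟩_w / ⟨𝟙, 𝟙⟩_w. Assume ⟨𝟙, v⟩_w = 0, ⟨v, v²⟩_w = 0, v ≠ 0, and v² − c𝟙 ≠ 0. Given f ∈ ℝⁿ, let ρ = Σ_j f_j ω_j, J = Σ_j f_j v_j ω_j, κ = ½Σ_j f_j v_j² ω_j, and define f₁ = (ρ/⟨𝟙,𝟙⟩_w)·(w ⋆ 𝟙) + (J/⟨v,v⟩_w)·(w ⋆ v) + ((2κ − cρ)/⟨v²−c𝟙, v²−c𝟙⟩_w)·(w ⋆ (v²−c𝟙)).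 Then the remainder f₂ = f − f₁ has zero discrete mass, momentum and kinetic energy: Σ_j (f₂)_j ω_j = 0, Σ_j (f₂)_j v_j ω_j = 0, and Σ_j (f₂)_j v_j² ω_j = 0. -/
/-!
Writing `⟨f, φ⟩_w = ∑ f φ w ω`, the moment `∑ⱼ fⱼ φⱼ ωⱼ` equals `⟨f / w, φ⟩_w`, and `f₁ = w ⋆ P (f / w)`
where `P` is the `⟨·,·⟩_w`-orthogonal projection onto the span of `1, v, v² − c`; these three are
orthogonal by the hypotheses and the choice of `c`. Hence `f − f₁` has zero moment against each of
them, and so against `1`, `v` and `v² = (v² − c) + c·1`.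
-/

open Finset

namespace LoMaC

variable {ι κ : Type*} [Fintype ι] [Fintype κ]

def moment (ω ψ f : ι → ℝ) : ℝ := ∑ j, f j * ψ j * ω j

def wInner (w ω φ ψ : ι → ℝ) : ℝ := ∑ j, φ j * ψ j * w j * ω j

noncomputable def weightedProj (w ω : ι → ℝ) (φ : κ → ι → ℝ) (f : ι → ℝ) : ι → ℝ :=
  fun j => ∑ l, (moment ω (φ l) f / wInner w ω (φ l) (φ l)) * (w j * φ l j)

theorem wInner_comm (w ω φ ψ : ι → ℝ) : wInner w ω φ ψ = wInner w ω ψ φ :=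
  sum_congr rfl fun _ _ => by ring

theorem wInner_self_pos {w ω φ : ι → ℝ} (hω : ∀ j, 0 < ω j) (hw : ∀ j, 0 < w j)
    (hφ : φ ≠ 0) : 0 < wInner w ω φ φ := by
  obtain ⟨j, hj⟩ := Function.ne_iff.mp hφ
  exact sum_pos' (fun i _ => mul_nonneg (mul_nonneg (mul_self_nonneg _) (hw i).le) (hω i).le)
    ⟨j, mem_univ _, mul_pos (mul_pos (mul_self_pos.mpr hj) (hw j)) (hω j)⟩

theorem wInner_sub_mul_right (w ω φ ψ χ : ι → ℝ) (c : ℝ) :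
    wInner w ω φ (fun j => ψ j - c * χ j) = wInner w ω φ ψ - c * wInner w ω φ χ := by
  simp only [wInner, mul_sum, ← sum_sub_distrib]
  exact sum_congr rfl fun _ _ => by ring

theorem moment_sub_mul_left (ω ψ χ f : ι → ℝ) (c : ℝ) :
    moment ω (fun j => ψ j - c * χ j) f = moment ω ψ f - c * moment ω χ f := by
  simp only [moment, mul_sum, ← sum_sub_distrib]
  exact sum_congr rfl fun _ _ => by ring

theorem moment_sub_right (ω ψ f g : ι → ℝ) :
    moment ω ψ (fun j => f j - g j) = moment ω ψ f - moment ω ψ g := by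
  simp only [moment, ← sum_sub_distrib, sub_mul]

theorem moment_weightedProj (w ω ψ : ι → ℝ) (φ : κ → ι → ℝ) (f : ι → ℝ) :
    moment ω ψ (weightedProj w ω φ f) =
      ∑ l, moment ω (φ l) f / wInner w ω (φ l) (φ l) * wInner w ω (φ l) ψ := by
  simp only [moment, weightedProj, wInner, sum_mul, mul_sum]
  rw [sum_comm]
  exact sum_congr rfl fun _ _ => sum_congr rfl fun _ _ => by ring

theorem moment_weightedProj_of_orthogonal {w ω : ι → ℝ} {φ : κ → ι → ℝ}
    (horth : Pairwise fun k l => wInner w ω (φ k) (φ l) = 0)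
    (hφ : ∀ k, wInner w ω (φ k) (φ k) ≠ 0) (f : ι → ℝ) (k : κ) :
    moment ω (φ k) (weightedProj w ω φ f) = moment ω (φ k) f := by
  rw [moment_weightedProj, sum_eq_single k (fun l _ hlk => by rw [horth hlk, mul_zero])
    (fun h => absurd (mem_univ k) h), div_mul_cancel₀ _ (hφ k)]

theorem moment_sub_weightedProj_eq_zero {w ω : ι → ℝ} {φ : κ → ι → ℝ}
    (horth : Pairwise fun k l => wInner w ω (φ k) (φ l) = 0)
    (hφ : ∀ k, wInner w ω (φ k) (φ k) ≠ 0) (f : ι → ℝ) (k : κ) :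
    moment ω (φ k) (fun j => f j - weightedProj w ω φ f j) = 0 := by
  rw [moment_sub_right, moment_weightedProj_of_orthogonal horth hφ, sub_self]

def lomacBasis (v : ι → ℝ) (c : ℝ) : Fin 3 → ι → ℝ :=
  ![fun _ => 1, v, fun j => v j ^ 2 - c * 1]

theorem lomacBasis_orthogonal {w ω : ι → ℝ} (v : ι → ℝ) (c : ℝ)
    (hone : wInner w ω (fun _ => 1) (fun _ => 1) ≠ 0)
    (hc : c = wInner w ω (fun _ => 1) (fun j => v j ^ 2) / wInner w ω (fun _ => 1) (fun _ => 1))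
    (h01 : wInner w ω (fun _ => 1) v = 0) (h12 : wInner w ω v (fun j => v j ^ 2) = 0) :
    Pairwise fun k l => wInner w ω (lomacBasis v c k) (lomacBasis v c l) = 0 := by
  have h02 : wInner w ω (fun _ => 1) (fun j => v j ^ 2 - c * 1) = 0 := by
    rw [wInner_sub_mul_right, hc, div_mul_cancel₀ _ hone, sub_self]
  have h12' : wInner w ω v (fun j => v j ^ 2 - c * 1) = 0 := by
    rw [wInner_sub_mul_right, h12, wInner_comm, h01, mul_zero, sub_zero]
  intro k l hkl
  fin_cases k <;> fin_cases l <;> first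
    | exact absurd rfl hkl
    | exact h01 | exact h02 | exact h12'
    | exact (wInner_comm _ _ _ _).trans h01
    | exact (wInner_comm _ _ _ _).trans h02
    | exact (wInner_comm _ _ _ _).trans h12'

theorem weightedProj_lomacBasis_apply (w ω v : ι → ℝ) (c : ℝ) (f : ι → ℝ) (j : ι) :
    weightedProj w ω (lomacBasis v c) f j =
      moment ω (fun _ => 1) f / wInner w ω (fun _ => 1) (fun _ => 1) * (w j * 1)
      + moment ω v f / wInner w ω v v * (w j * v j)
      + moment ω (fun j => v j ^ 2 - c * 1) f
          / wInner w ω (fun j => v j ^ 2 - c * 1) (fun j => v j ^ 2 - c * 1)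
        * (w j * (v j ^ 2 - c * 1)) := by
  rw [weightedProj, Fin.sum_univ_three]
  rfl

end LoMaC

open LoMaC in
theorem lomac_remainder_has_zero_moments_general
    (n : ℕ) (v ω w : Fin n → ℝ)
    (hω : ∀ j, 0 < ω j) (hw : ∀ j, 0 < w j)
    (c : ℝ)
    (hc : c = (∑ j, (1:ℝ) * (v j) ^ 2 * w j * ω j) / (∑ j, (1:ℝ) * (1:ℝ) * w j * ω j))
    (horth1 : ∑ j, (1:ℝ) * v j * w j * ω j = 0)
    (horth2 : ∑ j, v j * (v j) ^ 2 * w j * ω j = 0)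
    (hv0 : v ≠ 0)
    (hvc0 : (fun j => (v j) ^ 2 - c * 1) ≠ (0 : Fin n → ℝ))
    (f : Fin n → ℝ) (ρ J κ : ℝ)
    (hρ : ρ = ∑ j, f j * ω j)
    (hJ : J = ∑ j, f j * v j * ω j)
    (hκ : κ = (1/2) * ∑ j, f j * (v j) ^ 2 * ω j)
    (f₁ f₂ : Fin n → ℝ)
    (hf₁ : ∀ j, f₁ j =
      (ρ / (∑ i, (1:ℝ) * (1:ℝ) * w i * ω i)) * (w j * 1)
      + (J / (∑ i, v i * v i * w i * ω i)) * (w j * v j)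
      + ((2 * κ - c * ρ)
          / (∑ i, ((v i) ^ 2 - c * 1) * ((v i) ^ 2 - c * 1) * w i * ω i))
        * (w j * ((v j) ^ 2 - c * 1)))
    (hf₂ : ∀ j, f₂ j = f j - f₁ j) :
    (∑ j, f₂ j * ω j = 0) ∧
    (∑ j, f₂ j * v j * ω j = 0) ∧
    (∑ j, f₂ j * (v j) ^ 2 * ω j = 0) := by
  obtain ⟨j₀, -⟩ := Function.ne_iff.mp hv0
  have hone : wInner w ω (fun _ => 1) (fun _ => 1) ≠ 0 :=
    (wInner_self_pos hω hw (Function.ne_iff.mpr ⟨j₀, one_ne_zero⟩)).ne'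
  have hnorm : ∀ k, wInner w ω (lomacBasis v c k) (lomacBasis v c k) ≠ 0 := by
    intro k
    fin_cases k
    exacts [hone, (wInner_self_pos hω hw hv0).ne', (wInner_self_pos hω hw hvc0).ne']
  have hmass : moment ω (fun _ => 1) f = ρ := by simp [moment, hρ]
  have henergy : moment ω (fun j => v j ^ 2 - c * 1) f = 2 * κ - c * ρ := by
    rw [moment_sub_mul_left, hmass, hκ, moment]
    ring
  obtain rfl : f₂ = fun j => f j - weightedProj w ω (lomacBasis v c) f j := by
    funext j
    rw [hf₂, hf₁, weightedProj_lomacBasis_apply, hmass, henergy, hJ]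
    -- the `wInner` denominators and `moment ω v f` unfold to the sums written in `hf₁`
    rfl
  set g := fun j => f j - weightedProj w ω (lomacBasis v c) f j
  have hzero := moment_sub_weightedProj_eq_zero
    (lomacBasis_orthogonal v c hone hc horth1 horth2) hnorm f
  have hmass₂ : moment ω (fun _ => 1) g = 0 := hzero 0
  have henergy₂ : moment ω (fun j => v j ^ 2 - c * 1) g = 0 := hzero 2
  refine ⟨by simpa [moment] using hmass₂, hzero 1, ?_⟩
  have hsq := moment_sub_mul_left ω (fun j => v j ^ 2) (fun _ => 1) g c
  rw [henergy₂, hmass₂, mul_zero, sub_zero] at hsq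
  exact hsq.symm

/-- In the LoMaC conservative decomposition `f = f₁ + f₂`, the remainder
`f₂ = f − f₁` has zero discrete mass, momentum and kinetic energy. -/
theorem lomac_remainder_has_zero_moments
    (n : ℕ) (hn : 1 ≤ n) (v ω w : Fin n → ℝ)
    (hω : ∀ j, 0 < ω j) (hw : ∀ j, 0 < w j)
    (c : ℝ)
    (hc : c = (∑ j, (1:ℝ) * (v j) ^ 2 * w j * ω j) / (∑ j, (1:ℝ) * (1:ℝ) * w j * ω j))
    (horth1 : ∑ j, (1:ℝ) * v j * w j * ω j = 0)
    (horth2 : ∑ j, v j * (v j) ^ 2 * w j * ω j = 0)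
    (hv0 : v ≠ 0)
    (hvc0 : (fun j => (v j) ^ 2 - c * 1) ≠ (0 : Fin n → ℝ))
    (f : Fin n → ℝ) (ρ J κ : ℝ)
    (hρ : ρ = ∑ j, f j * ω j)
    (hJ : J = ∑ j, f j * v j * ω j)
    (hκ : κ = (1/2) * ∑ j, f j * (v j) ^ 2 * ω j)
    (f₁ f₂ : Fin n → ℝ)
    (hf₁ : ∀ j, f₁ j =
      (ρ / (∑ i, (1:ℝ) * (1:ℝ) * w i * ω i)) * (w j * 1)
      + (J / (∑ i, v i * v i * w i * ω i)) * (w j * v j)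
      + ((2 * κ - c * ρ)
          / (∑ i, ((v i) ^ 2 - c * 1) * ((v i) ^ 2 - c * 1) * w i * ω i))
        * (w j * ((v j) ^ 2 - c * 1)))
    (hf₂ : ∀ j, f₂ j = f j - f₁ j) :
    (∑ j, f₂ j * ω j = 0) ∧
    (∑ j, f₂ j * v j * ω j = 0) ∧
    (∑ j, f₂ j * (v j) ^ 2 * ω j = 0) :=
  lomac_remainder_has_zero_moments_general n v ω w hω hw c hc horth1 horth2 hv0 hvc0 f ρ J κ hρ hJ
    hκ f₁ f₂ hf₁ hf₂
end
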